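/- arXiv:2304.12327 — 3 statements merged into one kernel-verified Lean document; each statement's English description precedes it below -/
import Mathlib

section
/- If (Q,d) is a complete separable metric space, then (P(Q), ρ) with the Prohorov metric is complete. -/
/-!
A Cauchy sequence for the Lévy–Prokhorov metric has totally bounded range, so it suffices that
totally bounded families of probability measures are relatively compact. Such a family is tight:
approximating it within `η` by finitely many measures, which are jointly tight on some compact `K`,
every member gives mass at least `1 - ε` to the `δ`-thickening of `K`; intersecting these
thickenings over `δ = 1 / (n + 1)` with summable errors `εₙ` gives a totally bounded, hence
relatively compact, set carrying all but `ε` of every member. Prokhorov's theorem then gives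
relative compactness.
-/

open MeasureTheory Metric Filter Topology TopologicalSpace Set
open scoped ENNReal

theorem completeSpace_of_forall_totallyBounded_isCompact_closure {α : Type*} [UniformSpace α]
    [IsCountablyGenerated (uniformity α)]
    (h : ∀ s : Set α, TotallyBounded s → IsCompact (closure s)) : CompleteSpace α :=
  UniformSpace.complete_of_cauchySeq_tendsto fun _ hu =>
    (cauchySeq_tendsto_of_isComplete (h _ hu.totallyBounded_range).isComplete
      (fun n => subset_closure (mem_range_self n)) hu).imp fun _ ha => ha.2

section PseudoMetric

variable {X : Type*} [PseudoMetricSpace X]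

theorem totallyBounded_iInter_thickening {K : ℕ → Set X} (hK : ∀ n, TotallyBounded (K n))
    {δ : ℕ → ℝ} (hδ : Tendsto δ atTop (𝓝 0)) :
    TotallyBounded (⋂ n, thickening (δ n) (K n)) := by
  refine Metric.totallyBounded_iff.2 fun r hr => ?_
  obtain ⟨n, hn⟩ := (hδ.eventually (gt_mem_nhds (half_pos hr))).exists
  obtain ⟨t, ht, hKt⟩ := Metric.totallyBounded_iff.1 (hK n) (r / 2) (half_pos hr)
  refine ⟨t, ht, (iInter_subset _ n).trans fun x hx => ?_⟩
  obtain ⟨z, hz, hxz⟩ := mem_thickening_iff.1 hx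
  obtain ⟨y, hy, hzy⟩ := mem_iUnion₂.1 (hKt hz)
  refine mem_iUnion₂.2 ⟨y, hy, ?_⟩
  rw [mem_ball] at hzy ⊢
  linarith [dist_triangle x z y]

variable [MeasurableSpace X] [CompleteSpace X]

theorem isTightMeasureSet_of_forall_measure_compl_thickening_le {S : Set (Measure X)}
    (h : ∀ ε : ℝ≥0∞, 0 < ε → ∀ δ : ℝ, 0 < δ →
      ∃ K, TotallyBounded K ∧ ∀ μ ∈ S, μ (thickening δ K)ᶜ ≤ ε) :
    IsTightMeasureSet S := by
  rw [isTightMeasureSet_iff_exists_isCompact_measure_compl_le]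
  intro ε hε
  obtain ⟨ε', hε'_pos, hε'_sum⟩ := ENNReal.exists_pos_sum_of_countable' hε.ne' ℕ
  choose K hK hKS using fun n : ℕ => h (ε' n) (hε'_pos n) (1 / (n + 1)) Nat.one_div_pos_of_nat
  set C := ⋂ n : ℕ, thickening (1 / (n + 1)) (K n)
  have hC : TotallyBounded C :=
    totallyBounded_iInter_thickening hK tendsto_one_div_add_atTop_nhds_zero_nat
  refine ⟨closure C, hC.closure.isCompact_of_isClosed isClosed_closure, fun μ hμ => ?_⟩
  calc μ (closure C)ᶜ ≤ μ (⋃ n : ℕ, (thickening (1 / (n + 1)) (K n))ᶜ) := by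
        rw [← compl_iInter]
        exact measure_mono (compl_subset_compl.2 subset_closure)
    _ ≤ ∑' n : ℕ, μ (thickening (1 / (n + 1)) (K n))ᶜ := measure_iUnion_le _
    _ ≤ ∑' n, ε' n := ENNReal.tsum_le_tsum fun n => hKS n μ hμ
    _ ≤ ε := hε'_sum.le

end PseudoMetric

section LevyProkhorov

variable {Ω : Type*} [MetricSpace Ω] [MeasurableSpace Ω] [SeparableSpace Ω] [CompleteSpace Ω]

section OpensMeasurable

variable [OpensMeasurableSpace Ω]

theorem isTightMeasureSet_of_finite {S : Set (ProbabilityMeasure Ω)} (hS : S.Finite) :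
    IsTightMeasureSet {((μ : ProbabilityMeasure Ω) : Measure Ω) | μ ∈ S} :=
  isTightMeasureSet_of_isCompact_closure hS.isCompact.closure

theorem LevyProkhorov.isTightMeasureSet_of_totallyBounded
    {S : Set (LevyProkhorov (ProbabilityMeasure Ω))} (hS : TotallyBounded S) :
    IsTightMeasureSet
      {((μ : ProbabilityMeasure Ω) : Measure Ω) | μ ∈ LevyProkhorov.ofMeasure ⁻¹' S} := by
  refine isTightMeasureSet_of_forall_measure_compl_thickening_le fun ε hε δ hδ => ?_
  set η := min (ε / 2) (ENNReal.ofReal δ)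
  have hη : 0 < η := lt_min (ENNReal.half_pos hε.ne') (ENNReal.ofReal_pos.2 hδ)
  obtain ⟨F, hF, hSF⟩ := EMetric.totallyBounded_iff.1 hS η hη
  obtain ⟨K, hK, hKF⟩ := isTightMeasureSet_iff_exists_isCompact_measure_compl_le.1
    (isTightMeasureSet_of_finite (hF.image LevyProkhorov.toMeasure)) (ε / 2)
    (ENNReal.half_pos hε.ne')
  refine ⟨K, hK.totallyBounded, ?_⟩
  rintro _ ⟨μ, hμ, rfl⟩
  obtain ⟨ν, hνF, hμν⟩ := mem_iUnion₂.1 (hSF hμ)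
  have hνK : ν.toMeasure.toMeasure Kᶜ ≤ ε / 2 :=
    hKF _ ⟨ν.toMeasure, mem_image_of_mem _ hνF, rfl⟩
  have hthick : thickening η.toReal K ⊆ thickening δ K :=
    thickening_mono (ENNReal.toReal_le_of_le_ofReal hδ.le (min_le_right _ _)) K
  have hνμ : ν.toMeasure.toMeasure K ≤ μ.toMeasure (thickening δ K) + η :=
    (left_measure_le_of_levyProkhorovEDist_lt (mem_eball'.1 hμν) hK.measurableSet).trans
      (add_le_add_left (measure_mono hthick) _)
  rw [prob_compl_eq_one_sub isOpen_thickening.measurableSet, tsub_le_iff_left]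
  calc (1 : ℝ≥0∞) = ν.toMeasure.toMeasure K + ν.toMeasure.toMeasure Kᶜ := by
        rw [measure_add_measure_compl hK.measurableSet, measure_univ]
    _ ≤ μ.toMeasure (thickening δ K) + η + ε / 2 := add_le_add hνμ hνK
    _ ≤ μ.toMeasure (thickening δ K) + ε := by
        rw [add_assoc]
        gcongr
        calc η + ε / 2 ≤ ε / 2 + ε / 2 := add_le_add_left (min_le_left _ _) _
          _ = ε := ENNReal.add_halves ε

end OpensMeasurable

theorem LevyProkhorov.isCompact_closure_of_totallyBounded [BorelSpace Ω]
    {S : Set (LevyProkhorov (ProbabilityMeasure Ω))} (hS : TotallyBounded S) :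
    IsCompact (closure S) := by
  -- Prokhorov's theorem is about the weak topology, which the metric induces on separable spaces.
  let e := LevyProkhorov.probabilityMeasureHomeomorph (Ω := Ω)
  rw [← e.isCompact_preimage, e.preimage_closure]
  exact isCompact_closure_of_isTightMeasureSet (isTightMeasureSet_of_totallyBounded hS)

end LevyProkhorov

/-- If `(Q,d)` is a complete separable metric space, then the space of Borel probability
measures on `Q` with the Prohorov metric is complete. -/
theorem prohorov_complete {Q : Type*} [MetricSpace Q] [MeasurableSpace Q] [BorelSpace Q]
    [CompleteSpace Q] [SeparableSpace Q] :
    CompleteSpace (LevyProkhorov (ProbabilityMeasure Q)) :=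
  completeSpace_of_forall_totallyBounded_isCompact_closure fun _ =>
    LevyProkhorov.isCompact_closure_of_totallyBounded
end

section
/- Let (Q,d) be a compact metric space, and for each N ∈ ℕ let L^N, L : P(Q) → ℝ be functions on the space of probability measures with the Prohorov metric such that each L^N is continuous, and whenever ρ(P_M, P) → 0 one has L^N(P_M) → L(P) as N, M → ∞. If P̂^N_M maximizes L^N over a subset P_M(Q) ⊆ P(Q), where P_M(Q) are increasing subsets whose union is dense in P(Q), then any subsequential limit P̂ of {P̂^N_M} (as M,N → ∞) maximizes L over P(Q). -/
/-!
Fix `P` and approximate it by `P_j ∈ P_{M_j}(Q)`. For `k` large, `ψ k ≥ M_j`, so by monotonicity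
`P_j` competes with the maximizer: `L^{φ k}(P_j) ≤ L^{φ k}(P̂^{φ k}_{ψ k})`. Choosing `k = k(j)`
large enough and letting `j → ∞`, the joint convergence hypothesis sends the left side to `L(P)`
and the right side to `L(P̂)`.
-/

open MeasureTheory Metric Filter Topology Function

theorem tendsto_uncurry_prod_atTop_of_forall_abs_sub_lt {α β : Type*} [Preorder α] [Preorder β]
    {f : α → β → ℝ} {a : ℝ}
    (h : ∀ ε > (0 : ℝ), ∃ x₀ y₀, ∀ x ≥ x₀, ∀ y ≥ y₀, |f x y - a| < ε) :
    Tendsto (uncurry f) (atTop ×ˢ atTop) (𝓝 a) := by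
  rw [Metric.tendsto_nhds]
  intro ε hε
  obtain ⟨x₀, y₀, hxy⟩ := h ε hε
  filter_upwards [prod_mem_prod (Ici_mem_atTop x₀) (Ici_mem_atTop y₀)] with p hp
  exact hxy p.1 hp.1 p.2 hp.2

theorem exists_seq_mem_tendsto_zero {α ι : Type*} {S : ι → Set α} {d : α → ℝ}
    (hd : ∀ x, 0 ≤ d x) (h : ∀ ε > (0 : ℝ), ∃ i, ∃ x ∈ S i, d x < ε) :
    ∃ (i : ℕ → ι) (x : ℕ → α), (∀ j, x j ∈ S (i j)) ∧ Tendsto (d ∘ x) atTop (𝓝 0) := by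
  choose i x hxS hdx using fun j : ℕ => h (1 / (j + 1)) Nat.one_div_pos_of_nat
  exact ⟨i, x, hxS, squeeze_zero (fun j => hd (x j)) (fun j => (hdx j).le)
    tendsto_one_div_add_atTop_nhds_zero_nat⟩

theorem le_of_tendsto_uncurry_of_eventually_le {β γ : Type*} [TopologicalSpace γ] [Preorder γ]
    [OrderClosedTopology γ] {l : Filter β} {u v : β → ℕ → γ} {a b : γ} {φ : ℕ → β}
    (hφ : Tendsto φ atTop l) (hu : Tendsto (uncurry u) (l ×ˢ atTop) (𝓝 a))
    (hv : Tendsto (uncurry v) (l ×ˢ atTop) (𝓝 b))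
    (hle : ∀ j, ∀ᶠ k in atTop, u (φ k) j ≤ v (φ k) k) : a ≤ b := by
  choose k hk using fun j => ((hle j).and (eventually_ge_atTop j)).exists
  have hk_tendsto : Tendsto k atTop atTop := tendsto_atTop_mono (fun j => (hk j).2) tendsto_id
  have hu' : Tendsto (fun j => u (φ (k j)) j) atTop (𝓝 a) :=
    hu.comp ((hφ.comp hk_tendsto).prodMk tendsto_id)
  have hv' : Tendsto (fun j => v (φ (k j)) (k j)) atTop (𝓝 b) :=
    hv.comp ((hφ.comp hk_tendsto).prodMk hk_tendsto)
  exact le_of_tendsto_of_tendsto' hu' hv' fun j => (hk j).1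

theorem subsequential_limit_maximizes_general {Q : Type*} [MetricSpace Q] [MeasurableSpace Q]
    (LN : ℕ → ProbabilityMeasure Q → ℝ) (L : ProbabilityMeasure Q → ℝ)
    (hconv : ∀ (PM : ℕ → ProbabilityMeasure Q) (P : ProbabilityMeasure Q),
      Tendsto (fun M => levyProkhorovDist (PM M).toMeasure P.toMeasure) atTop (𝓝 0) →
      ∀ ε > (0 : ℝ), ∃ N₀ M₀ : ℕ, ∀ N ≥ N₀, ∀ M ≥ M₀, |LN N (PM M) - L P| < ε)
    (PMset : ℕ → Set (ProbabilityMeasure Q)) (hmono : Monotone PMset)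
    (hdense : ∀ (P : ProbabilityMeasure Q), ∀ ε > (0 : ℝ),
      ∃ M, ∃ P' ∈ PMset M, levyProkhorovDist P.toMeasure P'.toMeasure < ε)
    (Phat : ℕ → ℕ → ProbabilityMeasure Q)
    (hmax : ∀ N M, ∀ P ∈ PMset M, LN N P ≤ LN N (Phat N M))
    (P0 : ProbabilityMeasure Q) (φ ψ : ℕ → ℕ)
    (hφ : Tendsto φ atTop atTop) (hψ : Tendsto ψ atTop atTop)
    (hlim : Tendsto (fun k => levyProkhorovDist (Phat (φ k) (ψ k)).toMeasure P0.toMeasure)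
      atTop (𝓝 0)) :
    ∀ P : ProbabilityMeasure Q, L P ≤ L P0 := by
  intro P
  obtain ⟨M, Papprox, hPapprox_mem, hPapprox⟩ :=
    exists_seq_mem_tendsto_zero
      (d := fun P' : ProbabilityMeasure Q => levyProkhorovDist P'.toMeasure P.toMeasure)
      (fun _ => ENNReal.toReal_nonneg) fun ε hε => by
        simpa only [levyProkhorovDist_comm P.toMeasure] using hdense P ε hε
  refine le_of_tendsto_uncurry_of_eventually_le hφ
    (tendsto_uncurry_prod_atTop_of_forall_abs_sub_lt (hconv Papprox P hPapprox))
    (tendsto_uncurry_prod_atTop_of_forall_abs_sub_lt (hconv _ P0 hlim)) fun j => ?_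
  filter_upwards [hψ.eventually_ge_atTop (M j)] with k hk
  exact hmax _ _ _ (hmono hk (hPapprox_mem j))

/-- Let `Q` be a compact metric space, `L^N, L : P(Q) → ℝ` with each `L^N` continuous for
the Prohorov metric, and such that whenever `ρ(P_M, P) → 0` one has `L^N(P_M) → L(P)` as
`N, M → ∞`.  If `P̂^N_M` maximizes `L^N` over increasing subsets `P_M(Q)` whose union is
dense, then any subsequential limit `P̂` of the `P̂^N_M` maximizes `L` over `P(Q)`. -/
theorem subsequential_limit_maximizes {Q : Type*} [MetricSpace Q] [CompactSpace Q]
    [MeasurableSpace Q] [BorelSpace Q]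
    (LN : ℕ → ProbabilityMeasure Q → ℝ) (L : ProbabilityMeasure Q → ℝ)
    (hcont : ∀ N, Continuous fun P : LevyProkhorov (ProbabilityMeasure Q) =>
      LN N (LevyProkhorov.toMeasureEquiv P))
    (hconv : ∀ (PM : ℕ → ProbabilityMeasure Q) (P : ProbabilityMeasure Q),
      Tendsto (fun M => levyProkhorovDist (PM M).toMeasure P.toMeasure) atTop (𝓝 0) →
      ∀ ε > (0 : ℝ), ∃ N₀ M₀ : ℕ, ∀ N ≥ N₀, ∀ M ≥ M₀, |LN N (PM M) - L P| < ε)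
    (PMset : ℕ → Set (ProbabilityMeasure Q)) (hmono : Monotone PMset)
    (hdense : ∀ (P : ProbabilityMeasure Q), ∀ ε > (0 : ℝ),
      ∃ M, ∃ P' ∈ PMset M, levyProkhorovDist P.toMeasure P'.toMeasure < ε)
    (Phat : ℕ → ℕ → ProbabilityMeasure Q)
    (hmem : ∀ N M, Phat N M ∈ PMset M)
    (hmax : ∀ N M, ∀ P ∈ PMset M, LN N P ≤ LN N (Phat N M))
    (P0 : ProbabilityMeasure Q) (φ ψ : ℕ → ℕ)
    (hφ : Tendsto φ atTop atTop) (hψ : Tendsto ψ atTop atTop)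
    (hlim : Tendsto (fun k => levyProkhorovDist (Phat (φ k) (ψ k)).toMeasure P0.toMeasure)
      atTop (𝓝 0)) :
    ∀ P : ProbabilityMeasure Q, L P ≤ L P0 :=
  subsequential_limit_maximizes_general LN L hconv PMset hmono hdense Phat hmax P0 φ ψ hφ hψ hlim
end

section
/- Let Q be compact, and suppose for each k and q ∈ Q the approximate outputs satisfy |y_k^N(q) − y_k(q)| → 0 as N → ∞ uniformly in q ∈ Q, with all y_k^N, y_k uniformly bounded, and let φ : ℝ → ℝ be continuous. Then for any fixed data ŷ_k and any sequence of probability measures P_M with ρ(P_M, P) → 0 in the Prohorov metric, ∫_Q ∏_{k=1}^{n} φ(ŷ_k − y_k^N(q)) dP_M(q) → ∫_Q ∏_{k=1}^{n} φ(ŷ_k − y_k(q)) dP(q) as N, M → ∞. -/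
/-!
With `f_N = ∏ₖ φ(ŷₖ - yₖᴺ)` and `f = ∏ₖ φ(ŷₖ - yₖ)`, split
`∫ f_N dP_M - ∫ f dP = ∫ (f_N - f) dP_M + (∫ f dP_M - ∫ f dP)`.
The first term is at most `‖f_N - f‖_∞`, which tends to `0` because `v ↦ ∏ₖ φ(ŷₖ - vₖ)` is
uniformly continuous on the compact box `[-C, C]ⁿ` containing all outputs; the second tends
to `0` because convergence in the Lévy–Prokhorov metric implies weak convergence.
-/

open MeasureTheory Metric Filter Topology
open scoped BoundedContinuousFunction

theorem tendstoUniformly_pi_iff {α ι κ : Type*} {β : κ → Type*} [∀ k, UniformSpace (β k)]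
    {F : ι → α → ∀ k, β k} {f : α → ∀ k, β k} {p : Filter ι} :
    TendstoUniformly F f p ↔ ∀ k, TendstoUniformly (fun i x => F i x k) (fun x => f x k) p := by
  simp only [tendstoUniformly_iff_tendsto, Pi.uniformity, tendsto_iInf, tendsto_comap_iff]
  rfl

theorem ProbabilityMeasure.tendsto_of_tendsto_levyProkhorovDist_zero {Ω ι : Type*}
    [PseudoMetricSpace Ω] [MeasurableSpace Ω] [OpensMeasurableSpace Ω] {l : Filter ι}
    {μ : ι → ProbabilityMeasure Ω} {ν : ProbabilityMeasure Ω}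
    (h : Tendsto (fun i => levyProkhorovDist (μ i).toMeasure ν.toMeasure) l (𝓝 0)) :
    Tendsto μ l (𝓝 ν) :=
  (LevyProkhorov.continuous_toMeasure_probabilityMeasure.tendsto _).comp
    (tendsto_iff_dist_tendsto_zero.2 h :
      Tendsto (fun i => LevyProkhorov.ofMeasure (μ i)) l (𝓝 (LevyProkhorov.ofMeasure ν)))

theorem ProbabilityMeasure.tendsto_integral_of_tendsto_of_tendsto {X ι κ : Type*}
    [TopologicalSpace X] [MeasurableSpace X] [OpensMeasurableSpace X]
    {l : Filter ι} {l' : Filter κ} {f : ι → X →ᵇ ℝ} {g : X →ᵇ ℝ}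
    {μ : κ → ProbabilityMeasure X} {ν : ProbabilityMeasure X}
    (hf : Tendsto f l (𝓝 g)) (hμ : Tendsto μ l' (𝓝 ν)) :
    Tendsto (fun p : ι × κ => ∫ x, f p.1 x ∂(μ p.2 : Measure X)) (l ×ˢ l')
      (𝓝 (∫ x, g x ∂(ν : Measure X))) := by
  have h_err : Tendsto (fun p : ι × κ => ∫ x, (f p.1 - g) x ∂(μ p.2 : Measure X)) (l ×ˢ l')
      (𝓝 0) :=
    squeeze_zero_norm (fun p => (f p.1 - g).norm_integral_le_norm _)
      ((tendsto_iff_norm_sub_tendsto_zero.1 hf).comp tendsto_fst)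
  have h_weak := (ProbabilityMeasure.tendsto_iff_forall_integral_tendsto.1 hμ g).comp
    (tendsto_snd (f := l))
  convert h_err.add h_weak using 1
  · ext p
    simp [integral_sub ((f p.1).integrable _) (g.integrable _)]
  · simp

/-- Let `Q` be a compact metric space, `y_k^N → y_k` uniformly in `q` with all outputs
continuous and uniformly bounded, and `φ` continuous.  Then for fixed data `ŷ_k` and any
probability measures `P_M` with `ρ(P_M, P) → 0` in the Prohorov metric,
`∫_Q ∏_k φ(ŷ_k − y_k^N(q)) dP_M(q) → ∫_Q ∏_k φ(ŷ_k − y_k(q)) dP(q)` as `N, M → ∞`. -/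
theorem likelihood_integrand_double_limit {Q : Type*} [MetricSpace Q] [CompactSpace Q]
    [MeasurableSpace Q] [BorelSpace Q]
    (n : ℕ) (y : Fin n → Q → ℝ) (yN : ℕ → Fin n → Q → ℝ)
    (hy : ∀ k, Continuous (y k)) (hyN : ∀ N k, Continuous (yN N k))
    (hbdd : ∃ C : ℝ, ∀ N k q, |yN N k q| ≤ C ∧ |y k q| ≤ C)
    (hunif : ∀ k, TendstoUniformly (fun N => yN N k) (y k) atTop)
    (φ : ℝ → ℝ) (hφ : Continuous φ) (yhat : Fin n → ℝ)
    (PM : ℕ → ProbabilityMeasure Q) (P : ProbabilityMeasure Q)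
    (hP : Tendsto (fun M => levyProkhorovDist (PM M).toMeasure P.toMeasure) atTop (𝓝 0)) :
    ∀ ε > (0 : ℝ), ∃ N₀ M₀ : ℕ, ∀ N ≥ N₀, ∀ M ≥ M₀,
      |(∫ q, (∏ k, φ (yhat k - yN N k q)) ∂(PM M).toMeasure) -
        ∫ q, (∏ k, φ (yhat k - y k q)) ∂P.toMeasure| < ε := by
  obtain ⟨C, hC⟩ := hbdd
  let L : (Fin n → ℝ) → ℝ := fun v => ∏ k, φ (yhat k - v k)
  let K : Set (Fin n → ℝ) := Set.univ.pi fun _ => Set.Icc (-C) C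
  have hL : UniformContinuousOn L K :=
    (isCompact_univ_pi fun _ => isCompact_Icc).uniformContinuousOn_of_continuous (by fun_prop)
  have h_unif : TendstoUniformly (fun N q => L (yN N · q)) (fun q => L (y · q)) atTop :=
    hL.comp_tendstoUniformly (fun N q => Set.mem_univ_pi.2 fun k => abs_le.1 (hC N k q).1)
      (fun q => Set.mem_univ_pi.2 fun k => abs_le.1 (hC 0 k q).2)
      (tendstoUniformly_pi_iff.2 hunif)
  let f (N : ℕ) : Q →ᵇ ℝ :=
    BoundedContinuousFunction.mkOfCompact ⟨fun q => L (yN N · q), by fun_prop⟩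
  let g : Q →ᵇ ℝ := BoundedContinuousFunction.mkOfCompact ⟨fun q => L (y · q), by fun_prop⟩
  have h_lim := ProbabilityMeasure.tendsto_integral_of_tendsto_of_tendsto (f := f) (g := g)
    (BoundedContinuousFunction.tendsto_iff_tendstoUniformly.2 h_unif)
    (ProbabilityMeasure.tendsto_of_tendsto_levyProkhorovDist_zero hP)
  rw [prod_atTop_atTop_eq] at h_lim
  intro ε hε
  obtain ⟨⟨N₀, M₀⟩, h⟩ := eventually_atTop.1 (Metric.tendsto_nhds.1 h_lim ε hε)
  exact ⟨N₀, M₀, fun N hN M hM => h (N, M) ⟨hN, hM⟩⟩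
end
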